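/- arXiv:2009.01962 — 6 statements merged into one kernel-verified Lean document; each statement's English description precedes it below -/
import Mathlib

section
/- Let f be analytic on the open unit disk 𝔻, bounded, with Taylor truncation P_n at 0, and let z₀ ∈ 𝔻, z₀ ≠ 0. Then for every R ∈ ℂ and every δ > 0 there exists a bounded analytic function F on 𝔻 whose Taylor series at 0 agrees with P_n up to order n−1 (i.e. F(z) − P_n(z) = O(z^n)) and such that |F(z₀) − R| ≥ |z₀|^n (1 − δ) ‖F‖_∞. -/
/-! Adding `λ zⁿ` to `P_n = ∑_{k<n} c_k zᵏ` leaves the coefficients below order `n` unchanged,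
raises the sup norm on the disk by at most `λ` and moves the value at `z₀` by `λ |z₀|ⁿ`. So
`F = P_n + λ zⁿ` has `‖F‖_∞ ≤ ∑ |c_k| + λ` and `|F(z₀) − R| ≥ λ |z₀|ⁿ − |P_n(z₀) − R|`, and
`λ = (|P_n(z₀) − R| + |z₀|ⁿ ∑ |c_k|) / (δ |z₀|ⁿ)` is large enough. -/

open Metric Set Finset Asymptotics

theorem norm_sum_mul_pow_add_mul_pow_le {𝕜 : Type*} [NormedDivisionRing 𝕜] (c : ℕ → 𝕜)
    (a : 𝕜) (n : ℕ) {z : 𝕜} (hz : ‖z‖ ≤ 1) :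
    ‖∑ k ∈ range n, c k * z ^ k + a * z ^ n‖ ≤ ∑ k ∈ range n, ‖c k‖ + ‖a‖ := by
  have hmono : ∀ b : 𝕜, ∀ k, ‖b * z ^ k‖ ≤ ‖b‖ := fun b k => by
    rw [norm_mul, norm_pow]
    exact mul_le_of_le_one_right (norm_nonneg b) (pow_le_one₀ (norm_nonneg z) hz)
  calc ‖∑ k ∈ range n, c k * z ^ k + a * z ^ n‖
      ≤ ∑ k ∈ range n, ‖c k * z ^ k‖ + ‖a * z ^ n‖ :=
        (norm_add_le _ _).trans (add_le_add_left (norm_sum_le _ _) _)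
    _ ≤ ∑ k ∈ range n, ‖c k‖ + ‖a‖ :=
        add_le_add (sum_le_sum fun k _ => hmono (c k) k) (hmono a n)

theorem mul_one_sub_mul_le_of_le_add {r δ M C S l t : ℝ} (hr : 0 ≤ r) (hδ₀ : 0 ≤ δ)
    (hM : 0 ≤ M) (hS₀ : 0 ≤ S) (hS : S ≤ M + l) (hl : l * (r * δ) = C + r * M) (ht₀ : 0 ≤ t)
    (ht : l * r - C ≤ t) :
    r * (1 - δ) * S ≤ t := by
  rcases le_or_gt (1 - δ) 0 with hδ | hδ
  · nlinarith [mul_nonneg hr hS₀]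
  · nlinarith [mul_le_mul_of_nonneg_left hS (mul_nonneg hr hδ.le),
      mul_nonneg (mul_nonneg hr hM) hδ₀]

theorem stmt2_general (f : ℂ → ℂ)
    (n : ℕ) (z₀ : ℂ) (hz₀0 : z₀ ≠ 0)
    (R : ℂ) (δ : ℝ) (hδ : 0 < δ) :
    ∃ F : ℂ → ℂ, DifferentiableOn ℂ F (ball (0 : ℂ) 1) ∧
      BddAbove ((fun z => ‖F z‖) '' ball (0 : ℂ) 1) ∧
      (fun z : ℂ =>
          F z - ∑ k ∈ Finset.range n, (iteratedDeriv k f 0 / (k.factorial : ℂ)) * z ^ k)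
        =O[nhds 0] (fun z : ℂ => z ^ n) ∧
      ‖F z₀ - R‖ ≥
        ‖z₀‖ ^ n * (1 - δ) *
          sSup ((fun z => ‖F z‖) '' ball (0 : ℂ) 1) := by
  set c : ℕ → ℂ := fun k => iteratedDeriv k f 0 / (k.factorial : ℂ)
  set P : ℂ → ℂ := fun z => ∑ k ∈ range n, c k * z ^ k
  set M : ℝ := ∑ k ∈ range n, ‖c k‖
  set r : ℝ := ‖z₀‖ ^ n
  have hr : 0 < r := by positivity
  set l : ℝ := (‖P z₀ - R‖ + r * M) / (r * δ)
  have hl₀ : 0 ≤ l := by positivity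
  have hl : l * (r * δ) = ‖P z₀ - R‖ + r * M := div_mul_cancel₀ _ (by positivity)
  have hnorm_l : ‖(l : ℂ)‖ = l := by simp [hl₀]
  have hbound : ∀ z ∈ ball (0 : ℂ) 1, ‖P z + l * z ^ n‖ ≤ M + l := fun z hz => by
    simpa only [hnorm_l] using norm_sum_mul_pow_add_mul_pow_le c l n (mem_ball_zero_iff.1 hz).le
  refine ⟨fun z => P z + l * z ^ n, by fun_prop, ⟨M + l, forall_mem_image.2 hbound⟩,
    by simpa only [P, c, add_sub_cancel_left] using (isBigO_refl _ _).const_mul_left (l : ℂ), ?_⟩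
  have hsup : sSup ((fun z => ‖P z + l * z ^ n‖) '' ball (0 : ℂ) 1) ≤ M + l :=
    csSup_le ((nonempty_ball.2 one_pos).image _) (forall_mem_image.2 hbound)
  have hsup₀ : 0 ≤ sSup ((fun z => ‖P z + l * z ^ n‖) '' ball (0 : ℂ) 1) :=
    Real.sSup_nonneg (forall_mem_image.2 fun _ _ => norm_nonneg _)
  have hvalue : l * r - ‖P z₀ - R‖ ≤ ‖P z₀ + l * z₀ ^ n - R‖ := by
    have h := norm_sub_norm_le ((l : ℂ) * z₀ ^ n) (-(P z₀ - R))
    rwa [norm_neg, norm_mul, norm_pow, hnorm_l, sub_neg_eq_add, add_comm, sub_add_eq_add_sub] at h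
  exact mul_one_sub_mul_le_of_le_add hr.le hδ.le (sum_nonneg fun k _ => norm_nonneg (c k))
    hsup₀ hsup hl (norm_nonneg _) hvalue

/-- Optimality (lower bound): given the Maclaurin polynomial `P_n` of a bounded analytic `f`
on the unit disk and `z₀ ≠ 0` in the disk, for every candidate value `R` and every `δ > 0`
there is a bounded analytic `F` with the same Maclaurin polynomial such that
`|F(z₀) − R| ≥ |z₀|^n (1−δ) ‖F‖_∞`. -/
theorem stmt2 (f : ℂ → ℂ)
    (hf : DifferentiableOn ℂ f (ball (0 : ℂ) 1))
    (hfb : BddAbove ((fun z => ‖f z‖) '' ball (0 : ℂ) 1))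
    (n : ℕ) (z₀ : ℂ) (hz₀ : z₀ ∈ ball (0 : ℂ) 1) (hz₀0 : z₀ ≠ 0)
    (R : ℂ) (δ : ℝ) (hδ : 0 < δ) :
    ∃ F : ℂ → ℂ, DifferentiableOn ℂ F (ball (0 : ℂ) 1) ∧
      BddAbove ((fun z => ‖F z‖) '' ball (0 : ℂ) 1) ∧
      (fun z : ℂ =>
          F z - ∑ k ∈ Finset.range n, (iteratedDeriv k f 0 / (k.factorial : ℂ)) * z ^ k)
        =O[nhds 0] (fun z : ℂ => z ^ n) ∧
      ‖F z₀ - R‖ ≥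
        ‖z₀‖ ^ n * (1 - δ) *
          sSup ((fun z => ‖F z‖) '' ball (0 : ℂ) 1) :=
  stmt2_general f n z₀ hz₀0 R δ hδ
end

section
/- If F and G are analytic on a star-shaped (with respect to 0) open domain 𝒩 ⊆ ℂ containing 0, then the Laplace convolution (F*G)(ω) = ∫₀^ω F(s)G(ω−s) ds (integral along the segment from 0 to ω) is analytic on 𝒩. -/
open Metric Set

/-!
Differentiate under the integral sign. Star-convexity keeps `tω` and `(1 - t)ω` in `N` for
`ω ∈ N` and `t ∈ [0, 1]`, so the integrand and its `ω`-derivative are jointly continuous on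
`N × [0, 1]` (`F'` and `G'` are continuous since holomorphic functions are analytic). On a compact
neighbourhood `closedBall ω₀ ε × [0, 1]` the derivative is thus bounded, which gives the
domination needed to differentiate under the integral.
-/

open MeasureTheory Function
open scoped Interval

section ParametricIntervalIntegral

variable {𝕜 : Type*} [RCLike 𝕜] {E : Type*} [NormedAddCommGroup E] [NormedSpace ℝ E]
  [NormedSpace 𝕜 E] {f f' : 𝕜 → ℝ → E} {U : Set 𝕜} {a b : ℝ}

theorem hasDerivAt_intervalIntegral_of_continuousOn (hU : IsOpen U)
    (hf : ContinuousOn (uncurry f) (U ×ˢ [[a, b]]))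
    (hf' : ContinuousOn (uncurry f') (U ×ˢ [[a, b]]))
    (hdiff : ∀ x ∈ U, ∀ t ∈ [[a, b]], HasDerivAt (f · t) (f' x t) x) {x₀ : 𝕜} (hx₀ : x₀ ∈ U) :
    HasDerivAt (fun x => ∫ t in a..b, f x t) (∫ t in a..b, f' x₀ t) x₀ := by
  obtain ⟨ε, hε, hball⟩ := nhds_basis_closedBall.mem_iff.1 (hU.mem_nhds hx₀)
  have hball' : ball x₀ ε ⊆ U := ball_subset_closedBall.trans hball
  obtain ⟨C, hC⟩ := ((isCompact_closedBall x₀ ε).prod isCompact_uIcc).exists_bound_of_continuousOn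
    (hf'.mono (prod_mono hball subset_rfl))
  have hmeas : ∀ {g : ℝ → E}, ContinuousOn g [[a, b]] →
      AEStronglyMeasurable g (volume.restrict (Ι a b)) := fun hg =>
    (hg.mono uIoc_subset_uIcc).aestronglyMeasurable measurableSet_uIoc
  refine (intervalIntegral.hasDerivAt_integral_of_dominated_loc_of_deriv_le (bound := fun _ => C)
    (ball_mem_nhds x₀ hε) ?_ ((hf.uncurry_left x₀ hx₀).intervalIntegrable)
    (hmeas (hf'.uncurry_left x₀ hx₀)) ?_ intervalIntegrable_const ?_).2
  · filter_upwards [ball_mem_nhds x₀ hε] with x hx using hmeas (hf.uncurry_left x (hball' hx))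
  · filter_upwards with t ht x hx
      using hC (x, t) ⟨ball_subset_closedBall hx, uIoc_subset_uIcc ht⟩
  · filter_upwards with t ht x hx using hdiff x (hball' hx) t (uIoc_subset_uIcc ht)

end ParametricIntervalIntegral

theorem StarConvex.ofReal_mul_mem {N : Set ℂ} (hN : StarConvex ℝ 0 N) {ω : ℂ} (hω : ω ∈ N)
    {t : ℝ} (ht : t ∈ Icc 0 1) : (t : ℂ) * ω ∈ N := by
  simpa [Complex.real_smul] using hN.smul_mem hω ht.1 ht.2

theorem StarConvex.one_sub_ofReal_mul_mem {N : Set ℂ} (hN : StarConvex ℝ 0 N) {ω : ℂ}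
    (hω : ω ∈ N) {t : ℝ} (ht : t ∈ Icc 0 1) : (1 - (t : ℂ)) * ω ∈ N := by
  simpa using hN.ofReal_mul_mem hω (t := 1 - t) ⟨sub_nonneg.2 ht.2, sub_le_self 1 ht.1⟩

theorem ContinuousOn.comp_ofReal_mul {N : Set ℂ} (hN : StarConvex ℝ 0 N) {H : ℂ → ℂ}
    (hH : ContinuousOn H N) :
    ContinuousOn (fun p : ℂ × ℝ => H (p.2 * p.1)) (N ×ˢ Icc 0 1) :=
  hH.comp (by fun_prop) fun _ hp => hN.ofReal_mul_mem hp.1 hp.2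

theorem ContinuousOn.comp_one_sub_ofReal_mul {N : Set ℂ} (hN : StarConvex ℝ 0 N) {H : ℂ → ℂ}
    (hH : ContinuousOn H N) :
    ContinuousOn (fun p : ℂ × ℝ => H ((1 - p.2) * p.1)) (N ×ˢ Icc 0 1) :=
  hH.comp (by fun_prop) fun _ hp => hN.one_sub_ofReal_mul_mem hp.1 hp.2

theorem stmt5_general (N : Set ℂ) (hNopen : IsOpen N)
    (hstar : StarConvex ℝ (0 : ℂ) N)
    (F G : ℂ → ℂ)
    (hF : DifferentiableOn ℂ F N) (hG : DifferentiableOn ℂ G N) :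
    DifferentiableOn ℂ
      (fun ω : ℂ => ∫ t in (0 : ℝ)..1, F ((t : ℂ) * ω) * G ((1 - (t : ℂ)) * ω) * ω) N := by
  have hF' := (hF.analyticOnNhd hNopen).deriv.continuousOn
  have hG' := (hG.analyticOnNhd hNopen).deriv.continuousOn
  have hfst : ContinuousOn (fun p : ℂ × ℝ => p.1) (N ×ˢ Icc 0 1) := continuousOn_fst
  have hsnd : ContinuousOn (fun p : ℂ × ℝ => (p.2 : ℂ)) (N ×ˢ Icc 0 1) := by fun_prop
  have hFG := (hF.continuousOn.comp_ofReal_mul hstar).mul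
    (hG.continuousOn.comp_one_sub_ofReal_mul hstar)
  intro ω₀ hω₀
  refine (hasDerivAt_intervalIntegral_of_continuousOn (f' := fun ω t =>
      (deriv F (t * ω) * t * G ((1 - t) * ω) + F (t * ω) * (deriv G ((1 - t) * ω) * (1 - t))) * ω
        + F (t * ω) * G ((1 - t) * ω) * 1)
    hNopen ?_ ?_ ?_ hω₀).differentiableAt.differentiableWithinAt <;>
    rw [uIcc_of_le zero_le_one]
  · exact hFG.mul hfst
  · exact (((((hF'.comp_ofReal_mul hstar).mul hsnd).mul
      (hG.continuousOn.comp_one_sub_ofReal_mul hstar)).add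
      ((hF.continuousOn.comp_ofReal_mul hstar).mul
        ((hG'.comp_one_sub_ofReal_mul hstar).mul (continuousOn_const.sub hsnd)))).mul hfst).add
      (hFG.mul continuousOn_const)
  · intro ω hω t ht
    have hFt := (hF.differentiableAt (hNopen.mem_nhds (hstar.ofReal_mul_mem hω ht))).hasDerivAt
    have hGt := (hG.differentiableAt
      (hNopen.mem_nhds (hstar.one_sub_ofReal_mul_mem hω ht))).hasDerivAt
    exact ((hFt.comp ω (hasDerivAt_const_mul _)).mul (hGt.comp ω (hasDerivAt_const_mul _))).mul
      (hasDerivAt_id ω)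

/-- Analyticity of Laplace convolution on a star-shaped domain: if `F` and `G` are analytic
on an open set `N ⊆ ℂ` which is star-shaped with respect to `0`, then
`(F*G)(ω) = ∫₀^1 F(tω) G((1−t)ω) ω dt` is analytic on `N`. -/
theorem stmt5 (N : Set ℂ) (hNopen : IsOpen N) (h0N : (0 : ℂ) ∈ N)
    (hstar : StarConvex ℝ (0 : ℂ) N)
    (F G : ℂ → ℂ)
    (hF : DifferentiableOn ℂ F N) (hG : DifferentiableOn ℂ G N) :
    DifferentiableOn ℂ
      (fun ω : ℂ => ∫ t in (0 : ℝ)..1, F ((t : ℂ) * ω) * G ((1 - (t : ℂ)) * ω) * ω) N :=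
  stmt5_general N hNopen hstar F G hF hG
end

section
/- Let Φ : 𝔻 → ℂ be an injective analytic map (conformal onto its image 𝒟 = Φ(𝔻)) with Φ(0) = 0 and c = Φ'(0) > 0, and assume Φ(z) ≠ 0 for z ∈ 𝔻 \ {0}. Then for each n ≥ 1 the function Φ_n(z) := (Φ(z^n))^{1/n}, defined by the branch with Φ_n(z) = c^{1/n} z (1 + o(1)) near 0, extends to an analytic injective map on 𝔻 whose image is ⋃_{j=0}^{n-1} e^{2πij/n} 𝒟^{1/n}. -/
/-! `Φ(w) = w g(w)` with `g = dslope Φ 0` holomorphic and zero-free on the disk and `g(0) = c`, so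
`g` has a holomorphic `n`-th root `h` with `h(0) = c^{1/n}` (a primitive of `g'/g` gives a
logarithm), and `Φₙ(z) = z h(zⁿ)`. If `Φₙ(z) = Φₙ(v)` then `Φ(zⁿ) = Φ(vⁿ)`, so `zⁿ = vⁿ`, and then
`z = v` because `h(zⁿ) ≠ 0`. Every `w` with `wⁿ = Φ(u)` is reached: pick `zⁿ = u`; then `w` is
`Φₙ(z)` times an `n`-th root of unity `ζ`, and `Φₙ(ζ z) = ζ Φₙ(z)`. -/

open Metric Set Asymptotics

namespace Complex

variable {g : ℂ → ℂ} {c z₀ : ℂ} {r : ℝ}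

theorem exists_differentiableOn_exp_eq_ball (hg : DifferentiableOn ℂ g (ball c r))
    (hg₀ : ∀ z ∈ ball c r, g z ≠ 0) (hz₀ : z₀ ∈ ball c r) {w₀ : ℂ} (hw₀ : exp w₀ = g z₀) :
    ∃ f : ℂ → ℂ, DifferentiableOn ℂ f (ball c r) ∧ f z₀ = w₀ ∧
      ∀ z ∈ ball c r, exp (f z) = g z := by
  obtain ⟨f, hfz₀, hf⟩ :=
    ((hg.deriv isOpen_ball).div hg hg₀).isExactOn_ball.with_val_at z₀ w₀
  have hgd : ∀ z ∈ ball c r, HasDerivAt g (deriv g z) z := fun z hz =>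
    (hg.differentiableAt (isOpen_ball.mem_nhds hz)).hasDerivAt
  -- `g * exp (-f)` has vanishing derivative, so it is the constant `g z₀ * exp (-w₀) = 1`.
  have hquot : ∀ z ∈ ball c r, HasDerivAt (fun z => g z * exp (-f z)) 0 z := by
    intro z hz
    refine ((hgd z hz).mul (hf z hz).neg.cexp).congr_deriv ?_
    simp only [Pi.div_apply]
    field_simp [hg₀ z hz]
    ring
  refine ⟨f, fun z hz => (hf z hz).differentiableAt.differentiableWithinAt, hfz₀,
    fun z hz => ?_⟩
  have hconst := isOpen_ball.is_const_of_deriv_eq_zero (convex_ball c r).isPreconnected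
    (fun z hz => (hquot z hz).differentiableAt.differentiableWithinAt)
    (fun z hz => (hquot z hz).deriv) hz hz₀
  rw [hfz₀, ← hw₀, exp_neg, exp_neg, mul_inv_cancel₀ (exp_ne_zero _)] at hconst
  exact ((mul_inv_eq_one₀ (exp_ne_zero _)).mp hconst).symm

theorem exists_differentiableOn_pow_eq_ball (hg : DifferentiableOn ℂ g (ball c r))
    (hg₀ : ∀ z ∈ ball c r, g z ≠ 0) (hz₀ : z₀ ∈ ball c r) {n : ℕ} (hn : n ≠ 0) {w₀ : ℂ}
    (hw₀ : w₀ ^ n = g z₀) :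
    ∃ h : ℂ → ℂ, DifferentiableOn ℂ h (ball c r) ∧ h z₀ = w₀ ∧
      ∀ z ∈ ball c r, h z ^ n = g z := by
  have hw₀₀ : w₀ ≠ 0 := by
    rintro rfl
    exact hg₀ z₀ hz₀ (by rw [← hw₀, zero_pow hn])
  have hn' : (n : ℂ) ≠ 0 := Nat.cast_ne_zero.mpr hn
  obtain ⟨f, hf, hfz₀, hexp⟩ := exists_differentiableOn_exp_eq_ball hg hg₀ hz₀
    (w₀ := n * log w₀) (by rw [exp_nat_mul, exp_log hw₀₀, hw₀])
  refine ⟨fun z => exp (f z / n), (hf.div_const _).cexp, ?_, fun z hz => ?_⟩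
  · simp only [hfz₀, mul_div_cancel_left₀ _ hn', exp_log hw₀₀]
  · rw [← exp_nat_mul, mul_div_cancel₀ _ hn', hexp z hz]

end Complex

section NFoldSymmetrization

variable {Φ h : ℂ → ℂ} {n : ℕ}

theorem pow_mem_ball_zero_one {z : ℂ} (hz : z ∈ ball (0 : ℂ) 1) (hn : n ≠ 0) :
    z ^ n ∈ ball (0 : ℂ) 1 := by
  rw [mem_ball_zero_iff, norm_pow] at *
  exact pow_lt_one₀ (norm_nonneg z) hz hn

theorem differentiableOn_mul_comp_pow (hh : DifferentiableOn ℂ h (ball 0 1)) (hn : n ≠ 0) :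
    DifferentiableOn ℂ (fun z => z * h (z ^ n)) (ball 0 1) :=
  differentiableOn_id.mul <|
    hh.comp (differentiable_pow n).differentiableOn fun _ hz => pow_mem_ball_zero_one hz hn

theorem mul_comp_pow_pow (hΦh : ∀ w ∈ ball (0 : ℂ) 1, Φ w = w * h w ^ n) (hn : n ≠ 0)
    {z : ℂ} (hz : z ∈ ball (0 : ℂ) 1) : (z * h (z ^ n)) ^ n = Φ (z ^ n) := by
  rw [mul_pow, hΦh _ (pow_mem_ball_zero_one hz hn)]

theorem injOn_mul_comp_pow (hinj : InjOn Φ (ball 0 1)) (hh₀ : ∀ w ∈ ball (0 : ℂ) 1, h w ≠ 0)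
    (hΦh : ∀ w ∈ ball (0 : ℂ) 1, Φ w = w * h w ^ n) (hn : n ≠ 0) :
    InjOn (fun z => z * h (z ^ n)) (ball 0 1) := by
  intro z hz v hv hzv
  dsimp only at hzv
  have hpow : z ^ n = v ^ n := hinj (pow_mem_ball_zero_one hz hn) (pow_mem_ball_zero_one hv hn)
    (by rw [← mul_comp_pow_pow hΦh hn hz, ← mul_comp_pow_pow hΦh hn hv, hzv])
  simp only [hpow] at hzv
  exact mul_right_cancel₀ (hh₀ _ (pow_mem_ball_zero_one hv hn)) hzv

theorem image_mul_comp_pow (hΦh : ∀ w ∈ ball (0 : ℂ) 1, Φ w = w * h w ^ n) (hn : n ≠ 0) :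
    (fun z => z * h (z ^ n)) '' ball 0 1 = {w | w ^ n ∈ Φ '' ball 0 1} := by
  ext w
  constructor
  · rintro ⟨z, hz, rfl⟩
    exact ⟨z ^ n, pow_mem_ball_zero_one hz hn, (mul_comp_pow_pow hΦh hn hz).symm⟩
  · rintro ⟨u, hu, hwu⟩
    obtain ⟨z, rfl⟩ := IsAlgClosed.exists_pow_nat_eq u (Nat.pos_of_ne_zero hn)
    have hz : z ∈ ball (0 : ℂ) 1 := by
      rw [mem_ball_zero_iff, norm_pow] at hu
      rwa [mem_ball_zero_iff, ← pow_lt_one_iff_of_nonneg (norm_nonneg z) hn]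
    have hpow : w ^ n = (z * h (z ^ n)) ^ n := by rw [mul_comp_pow_pow hΦh hn hz, hwu]
    rcases eq_or_ne (z * h (z ^ n)) 0 with hzero | hzero
    · refine ⟨z, hz, ?_⟩
      rw [hzero, zero_pow hn, pow_eq_zero_iff hn] at hpow
      simp only [hzero, hpow]
    set ζ := w / (z * h (z ^ n))
    have hζ : ζ ^ n = 1 := by rw [div_pow, hpow, div_self (pow_ne_zero n hzero)]
    refine ⟨ζ * z, ?_, ?_⟩
    · rwa [mem_ball_zero_iff, norm_mul, Complex.norm_eq_one_of_pow_eq_one hζ hn, one_mul,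
        ← mem_ball_zero_iff]
    · simp only [mul_pow, hζ, one_mul]
      rw [mul_assoc]
      exact div_mul_cancel₀ w hzero

theorem isLittleO_mul_comp_pow_sub (hh : ContinuousAt h 0) (hn : n ≠ 0) :
    (fun z => z * h (z ^ n) - h 0 * z) =o[nhds 0] fun z => z := by
  have hcont : ContinuousAt (fun z : ℂ => h (z ^ n)) 0 :=
    hh.comp_of_eq (continuous_pow n).continuousAt (zero_pow hn)
  have hsmall : (fun z : ℂ => h (z ^ n) - h 0) =o[nhds 0] fun _ => (1 : ℂ) := by
    rw [isLittleO_one_iff]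
    simpa [zero_pow hn] using hcont.tendsto.sub_const (h 0)
  have hprod := hsmall.mul_isBigO (isBigO_refl (fun z : ℂ => z) (nhds 0))
  simp only [one_mul] at hprod
  exact hprod.congr_left fun z => by ring

end NFoldSymmetrization

/-- The `n`-fold symmetrization lemma: if `Φ` is an injective analytic map of the unit disk
with `Φ(0) = 0`, `Φ'(0) = c > 0`, nonvanishing away from `0`, then `Φₙ(z) = (Φ(zⁿ))^{1/n}`
(with the branch `Φₙ(z) = c^{1/n} z (1+o(1))` near `0`) is a well-defined analytic injective
map of the disk whose image is the union of the `n` rotated copies of `𝒟^{1/n}`,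
i.e. `{w : wⁿ ∈ 𝒟}`. -/
theorem stmt8 (Φ : ℂ → ℂ) (c : ℝ) (hc : 0 < c)
    (hΦ : DifferentiableOn ℂ Φ (ball (0 : ℂ) 1))
    (hinj : Set.InjOn Φ (ball (0 : ℂ) 1))
    (h0 : Φ 0 = 0) (hderiv : deriv Φ 0 = (c : ℂ))
    (hne : ∀ z ∈ ball (0 : ℂ) 1, z ≠ 0 → Φ z ≠ 0)
    (n : ℕ) (hn : 1 ≤ n) :
    ∃ Φn : ℂ → ℂ,
      DifferentiableOn ℂ Φn (ball (0 : ℂ) 1) ∧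
      Set.InjOn Φn (ball (0 : ℂ) 1) ∧
      (∀ z ∈ ball (0 : ℂ) 1, Φn z ^ n = Φ (z ^ n)) ∧
      (fun z : ℂ => Φn z - ((c ^ ((1 : ℝ) / n) : ℝ) : ℂ) * z) =o[nhds 0] (fun z : ℂ => z) ∧
      Φn '' ball (0 : ℂ) 1 = {w : ℂ | w ^ n ∈ Φ '' ball (0 : ℂ) 1} := by
  have hn0 : n ≠ 0 := Nat.one_le_iff_ne_zero.mp hn
  set g := dslope Φ 0
  have hΦg : ∀ z, Φ z = z * g z := fun z => by simpa [h0] using (sub_smul_dslope Φ 0 z).symm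
  have hg : DifferentiableOn ℂ g (ball 0 1) :=
    (Complex.differentiableOn_dslope (ball_mem_nhds 0 one_pos)).mpr hΦ
  have hg0 : g 0 = c := (dslope_same Φ 0).trans hderiv
  have hg₀ : ∀ z ∈ ball (0 : ℂ) 1, g z ≠ 0 := by
    intro z hz
    rcases eq_or_ne z 0 with rfl | hz0
    · exact hg0 ▸ Complex.ofReal_ne_zero.mpr hc.ne'
    · exact right_ne_zero_of_mul (hΦg z ▸ hne z hz hz0)
  have hroot : ((c ^ ((1 : ℝ) / n) : ℝ) : ℂ) ^ n = g 0 := by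
    rw [hg0, ← Complex.ofReal_pow, one_div, Real.rpow_inv_natCast_pow hc.le hn0]
  obtain ⟨h, hh, hh0, hhg⟩ :=
    Complex.exists_differentiableOn_pow_eq_ball hg hg₀ (mem_ball_self one_pos) hn0 hroot
  have hΦh : ∀ w ∈ ball (0 : ℂ) 1, Φ w = w * h w ^ n := fun w hw => by rw [hhg w hw, hΦg]
  refine ⟨fun z => z * h (z ^ n), differentiableOn_mul_comp_pow hh hn0,
    injOn_mul_comp_pow hinj (fun w hw => ?_) hΦh hn0, fun z hz => mul_comp_pow_pow hΦh hn0 hz,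
    ?_, image_mul_comp_pow hΦh hn0⟩
  · exact (pow_ne_zero_iff hn0).mp (hhg w hw ▸ hg₀ w hw)
  · simpa only [hh0] using
      isLittleO_mul_comp_pow_sub (hh.continuousOn.continuousAt (ball_mem_nhds 0 one_pos)) hn0
end

section
/- Let f be analytic in the unit disk with f(z) = c z (1 + o(z)) as z → 0, c ≠ 0, and f nonvanishing on 𝔻_r(0)\{0} for some 0 < r < 1. Then for an appropriate branch, f(z^n)^{1/n} → z uniformly on compact subsets of 𝔻_r(0) as n → ∞. -/
open Metric Set Filter

/-!
Write `f(w) = c w g(w)` with `g = dslope f 0 / c`, which is continuous and nonvanishing on a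
closed disk `closedBall 0 ρ ⊆ 𝔻_r(0)` containing `K`. Since `‖z‖ < 1`, `zⁿ` stays in that disk,
where `Complex.log ∘ g` is bounded. Hence the branch in question equals
`z · exp ((log ‖c‖ + log g(zⁿ)) / n)`, whose exponent is `O(1/n)` uniformly on `K`.
-/

open Complex in
theorem IsCompact.exists_bound_norm_log_of_continuousOn {α : Type*} [TopologicalSpace α]
    {S : Set α} (hS : IsCompact S) {g : α → ℂ} (hg : ContinuousOn g S)
    (hg0 : ∀ w ∈ S, g w ≠ 0) : ∃ B, ∀ w ∈ S, ‖log (g w)‖ ≤ B := by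
  have hlog : ContinuousOn (fun w => Real.log ‖g w‖) S :=
    hg.norm.log fun w hw => norm_ne_zero_iff.mpr (hg0 w hw)
  obtain ⟨B, hB⟩ := hS.exists_bound_of_continuousOn hlog
  refine ⟨B + Real.pi, fun w hw => ?_⟩
  calc ‖log (g w)‖ ≤ |(log (g w)).re| + |(log (g w)).im| := norm_le_abs_re_add_abs_im _
    _ ≤ B + Real.pi := by
      rw [log_re, log_im]
      exact add_le_add (hB w hw) (abs_arg_le_pi _)

theorem tendstoUniformlyOn_mul_exp_div_natCast {K : Set ℂ} (hK : Bornology.IsBounded K)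
    {a : ℕ → ℂ → ℂ} {B : ℝ} (ha : ∀ᶠ n in atTop, ∀ z ∈ K, ‖a n z‖ ≤ B) :
    TendstoUniformlyOn (fun n z => z * Complex.exp (a n z / n)) (fun z => z) atTop K := by
  obtain ⟨R, hR⟩ := isBounded_iff_forall_norm_le.mp hK
  have hB : Tendsto (fun n : ℕ => B / n) atTop (nhds 0) := tendsto_const_div_atTop_nhds_zero_nat B
  have hRB : Tendsto (fun n : ℕ => R * (2 * (B / n))) atTop (nhds 0) := by
    simpa using (hB.const_mul 2).const_mul R
  rw [Metric.tendstoUniformlyOn_iff]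
  intro ε hε
  filter_upwards [ha, hB.eventually (ge_mem_nhds one_pos), hRB.eventually (gt_mem_nhds hε)]
    with n han hn1 hnε z hz
  have hu : ‖a n z / n‖ ≤ B / n := by
    rw [norm_div, Complex.norm_natCast]
    exact div_le_div_of_nonneg_right (han z hz) n.cast_nonneg
  have hexp := Complex.norm_exp_sub_one_le (hu.trans hn1)
  rw [dist_eq_norm, ← norm_neg, neg_sub, ← mul_sub_one, norm_mul]
  calc ‖z‖ * ‖Complex.exp (a n z / n) - 1‖ ≤ R * (2 * (B / n)) := by
        gcongr
        exacts [(norm_nonneg z).trans (hR z hz), hR z hz, hexp.trans (by gcongr)]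
    _ < ε := hnε

section DSlope

variable {𝕜 E : Type*} [NontriviallyNormedField 𝕜] [NormedAddCommGroup E] [NormedSpace 𝕜 E]
  {f : 𝕜 → E} {a : 𝕜}

theorem dslope_ne_zero {w : 𝕜} (hfa : deriv f a ≠ 0) (hfw : w ≠ a → f w ≠ f a) :
    dslope f a w ≠ 0 := by
  rcases eq_or_ne w a with rfl | hw
  · rwa [dslope_same]
  · rw [dslope_of_ne f hw, slope_def_module]
    exact smul_ne_zero (inv_ne_zero (sub_ne_zero.mpr hw)) (sub_ne_zero.mpr (hfw hw))

theorem DifferentiableOn.continuousOn_dslope {s : Set 𝕜} (hf : DifferentiableOn 𝕜 f s)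
    (hs : IsOpen s) (ha : a ∈ s) : ContinuousOn (dslope f a) s :=
  (_root_.continuousOn_dslope (hs.mem_nhds ha)).mpr
    ⟨hf.continuousOn, hf.differentiableAt (hs.mem_nhds ha)⟩

end DSlope

theorem pow_mem_ball_zero_of_le_one {𝕜 : Type*} [NormedDivisionRing 𝕜] {z : 𝕜} {ρ : ℝ}
    (hρ : ρ ≤ 1) (hz : z ∈ ball 0 ρ) {n : ℕ} (hn : n ≠ 0) : z ^ n ∈ ball 0 ρ := by
  rw [mem_ball_zero_iff] at hz ⊢
  rw [norm_pow]
  exact (pow_le_of_le_one (norm_nonneg z) (hz.le.trans hρ) hn).trans_lt hz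

open Complex in
theorem ofReal_cpow_mul_mul_cpow_eq_mul_exp {x : ℝ} (hx : x ≠ 0) {w : ℂ} (hw : w ≠ 0)
    (z s : ℂ) : (x : ℂ) ^ s * z * w ^ s = z * exp ((log x + log w) * s) := by
  rw [cpow_def_of_ne_zero (ofReal_ne_zero.mpr hx), cpow_def_of_ne_zero hw, add_mul, exp_add]
  ring

theorem stmt9_general (f : ℂ → ℂ) (c : ℂ) (hc : c ≠ 0)
    (hf : DifferentiableOn ℂ f (ball (0 : ℂ) 1))
    (h0 : f 0 = 0) (hderiv : deriv f 0 = c)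
    (r : ℝ) (hr1 : r < 1)
    (hne : ∀ z ∈ ball (0 : ℂ) r, z ≠ 0 → f z ≠ 0) :
    ∀ K ⊆ ball (0 : ℂ) r, IsCompact K →
      TendstoUniformlyOn
        (fun (n : ℕ) (z : ℂ) =>
          (((‖c‖ : ℝ) : ℂ) ^ ((1 : ℂ) / n)) * z *
            ((f (z ^ n) / (c * z ^ n)) ^ ((1 : ℂ) / n)))
        (fun z => z) atTop K := by
  intro K hK hKc
  obtain ⟨ρ, hρr, hKρ⟩ := exists_lt_subset_ball hKc.isClosed hK
  set g : ℂ → ℂ := fun w => dslope f 0 w / c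
  have hg_eq : ∀ w ≠ 0, f w / (c * w) = g w := fun w hw => by
    simp only [g, dslope_of_ne f hw, slope_def_field, h0, sub_zero, div_div, mul_comm]
  have hg_ne : ∀ w ∈ closedBall (0 : ℂ) ρ, g w ≠ 0 := fun w hw =>
    div_ne_zero (dslope_ne_zero (hderiv ▸ hc)
      fun hw0 => h0.symm ▸ hne w (closedBall_subset_ball hρr hw) hw0) hc
  have hg_cont : ContinuousOn g (closedBall 0 ρ) :=
    ((hf.continuousOn_dslope isOpen_ball (mem_ball_self one_pos)).mono
      (closedBall_subset_ball (hρr.trans hr1))).div_const c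
  obtain ⟨B, hB⟩ :=
    (isCompact_closedBall 0 ρ).exists_bound_norm_log_of_continuousOn hg_cont hg_ne
  have hpow : ∀ n ≠ 0, ∀ z ∈ K, z ^ n ∈ closedBall (0 : ℂ) ρ := fun n hn z hz =>
    ball_subset_closedBall (pow_mem_ball_zero_of_le_one (hρr.trans hr1).le (hKρ hz) hn)
  refine (tendstoUniformlyOn_mul_exp_div_natCast hKc.isBounded
    (a := fun n z => Complex.log ‖c‖ + Complex.log (g (z ^ n))) (B := ‖Complex.log ‖c‖‖ + B)
    ?_).congr ?_ <;> filter_upwards [eventually_ne_atTop 0] with n hn z hz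
  · exact (norm_add_le _ _).trans (add_le_add_right (hB _ (hpow n hn z hz)) _)
  · rcases eq_or_ne z 0 with rfl | hz0
    · simp
    · dsimp only
      rw [hg_eq _ (pow_ne_zero n hz0), ofReal_cpow_mul_mul_cpow_eq_mul_exp (norm_ne_zero_iff.mpr hc)
        (hg_ne _ (hpow n hn z hz)), mul_one_div]

/-- The key limit of the Landen-type iteration: if `f` is analytic on the unit disk with
`f(z) = cz(1+o(z))`, `c ≠ 0`, and `f` is nonvanishing on the punctured disk of radius
`r < 1`, then for the branch `f(zⁿ)^{1/n} = |c|^{1/n} z (f(zⁿ)/(c zⁿ))^{1/n}` (principal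
branch) one has `f(zⁿ)^{1/n} → z` uniformly on compact subsets of the disk of radius `r`. -/
theorem stmt9 (f : ℂ → ℂ) (c : ℂ) (hc : c ≠ 0)
    (hf : DifferentiableOn ℂ f (ball (0 : ℂ) 1))
    (h0 : f 0 = 0) (hderiv : deriv f 0 = c)
    (r : ℝ) (hr0 : 0 < r) (hr1 : r < 1)
    (hne : ∀ z ∈ ball (0 : ℂ) r, z ≠ 0 → f z ≠ 0) :
    ∀ K ⊆ ball (0 : ℂ) r, IsCompact K →
      TendstoUniformlyOn
        (fun (n : ℕ) (z : ℂ) =>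
          (((‖c‖ : ℝ) : ℂ) ^ ((1 : ℂ) / n)) * z *
            ((f (z ^ n) / (c * z ^ n)) ^ ((1 : ℂ) / n)))
        (fun z => z) atTop K :=
  stmt9_general f c hc hf h0 hderiv r hr1 hne
end

section
/- For a, b > 0, the map φ_{ab}(z) = 4ab·z / (a(1+z)² + b(1−z)²) is a conformal bijection from the unit disk 𝔻 onto ℂ \ ((−∞,−a] ∪ [b,∞)), with inverse z = (1 − √(a(b−ω)/(b(a+ω))))/(1 + √(a(b−ω)/(b(a+ω)))). -/
open Metric Set Complex

/-!
On the disk, `φ_{ab} = m ∘ (·)² ∘ C`, where `C z = (1 - z) / (1 + z)` is an involution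
exchanging the unit disk and the right half-plane, squaring maps the right half-plane onto the
slit plane `ℂ \ (-∞, 0]` with inverse the principal square root, and the real Möbius map
`m s = ab(1 - s) / (a + bs)` maps the slit plane onto the complement of the two cuts, with
inverse `ω ↦ a(b - ω) / (b(a + ω))`. Composing the three inverses in reverse order gives `ψ`.
-/

namespace Complex

lemma sq_mem_slitPlane_of_re_pos {u : ℂ} (hu : 0 < u.re) : u ^ 2 ∈ slitPlane := by
  rw [mem_slitPlane_iff, sq, mul_re, mul_im]
  by_cases h : u.im = 0
  · left; simp only [h, mul_zero, sub_zero]; positivity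
  · right
    rw [mul_comm u.im, ← two_mul]
    exact mul_ne_zero two_ne_zero (mul_ne_zero hu.ne' h)

lemma re_sqrt_pos {x : ℂ} (hx : x ∈ slitPlane) : 0 < x.sqrt.re := by
  rw [sqrt, cpow_inv_two_re, Real.sqrt_pos]
  have : -x.re < ‖x‖ := by
    rcases mem_slitPlane_iff.1 hx with h | h
    · linarith [norm_nonneg x]
    · exact (neg_le_abs x.re).trans_lt <|
        (abs_re_le_norm x).lt_of_ne (mt abs_re_eq_norm.1 h)
  linarith

lemma sqrt_sq_of_re_pos {x : ℂ} (hx : 0 < x.re) : (x ^ 2).sqrt = x := sq_cpow_two_inv hx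

lemma sq_sqrt (x : ℂ) : x.sqrt ^ 2 = x := cpow_ofNat_inv_pow x 2

end Complex

noncomputable def cayley (z : ℂ) : ℂ := (1 - z) / (1 + z)

lemma one_add_cayley {z : ℂ} (hz : 1 + z ≠ 0) : 1 + cayley z = 2 / (1 + z) := by
  rw [cayley]; field_simp; ring

lemma cayley_cayley {z : ℂ} (hz : 1 + z ≠ 0) : cayley (cayley z) = z := by
  rw [cayley, one_add_cayley hz, cayley]
  field_simp
  ring

lemma one_add_ne_zero_of_re_pos {w : ℂ} (hw : 0 < w.re) : 1 + w ≠ 0 := by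
  intro h
  have := congrArg re h
  simp only [add_re, one_re, zero_re] at this
  linarith

lemma one_add_ne_zero_of_mem_ball {z : ℂ} (hz : z ∈ ball (0 : ℂ) 1) : 1 + z ≠ 0 := by
  intro h
  rw [mem_ball_zero_iff, eq_neg_of_add_eq_zero_right h] at hz
  simp at hz

lemma norm_cayley_lt_one_iff {w : ℂ} (hw : 1 + w ≠ 0) : ‖cayley w‖ < 1 ↔ 0 < w.re := by
  rw [cayley, norm_div, div_lt_one (norm_pos_iff.2 hw),
    ← sq_lt_sq₀ (norm_nonneg _) (norm_nonneg _), ← normSq_eq_norm_sq, ← normSq_eq_norm_sq,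
    normSq_apply, normSq_apply]
  simp only [sub_re, sub_im, add_re, add_im, one_re, one_im]
  constructor <;> intro h <;> nlinarith

lemma re_cayley_pos {z : ℂ} (hz : z ∈ ball (0 : ℂ) 1) : 0 < (cayley z).re := by
  have hz1 := one_add_ne_zero_of_mem_ball hz
  have hc : 1 + cayley z ≠ 0 := by
    rw [one_add_cayley hz1]; exact div_ne_zero two_ne_zero hz1
  rw [← norm_cayley_lt_one_iff hc, cayley_cayley hz1]
  simpa using hz

lemma cayley_mem_ball {w : ℂ} (hw : 0 < w.re) : cayley w ∈ ball (0 : ℂ) 1 := by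
  rw [mem_ball_zero_iff, norm_cayley_lt_one_iff (one_add_ne_zero_of_re_pos hw)]
  exact hw

def twoCut (a b : ℝ) : Set ℂ := {ω : ℂ | ω.im = 0 ∧ (ω.re ≤ -a ∨ b ≤ ω.re)}

noncomputable def twoCutMobius (a b : ℝ) (s : ℂ) : ℂ := a * b * (1 - s) / (a + b * s)

noncomputable def twoCutMobiusInv (a b : ℝ) (ω : ℂ) : ℂ := (a * (b - ω)) / (b * (a + ω))

lemma add_ne_zero_of_notMem_twoCut {a b : ℝ} {ω : ℂ} (hω : ω ∉ twoCut a b) :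
    (a : ℂ) + ω ≠ 0 := by
  intro h
  apply hω
  rw [eq_neg_of_add_eq_zero_right h]
  simp [twoCut]

section Mobius

variable {a b : ℝ} (ha : 0 < a) (hb : 0 < b)
include ha hb

lemma add_mul_ne_zero_of_mem_slitPlane {s : ℂ} (hs : s ∈ slitPlane) :
    (a : ℂ) + b * s ≠ 0 := by
  intro h
  have hs' : s = -((a / b : ℝ) : ℂ) := by
    push_cast
    field_simp [ofReal_ne_zero.2 hb.ne']
    linear_combination h
  rw [hs', neg_ofReal_mem_slitPlane] at hs
  exact (div_pos ha hb).not_gt hs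

lemma add_twoCutMobius_ne_zero {s : ℂ} (hs : (a : ℂ) + b * s ≠ 0) :
    (a : ℂ) + twoCutMobius a b s ≠ 0 := by
  have hab : (a : ℂ) + b ≠ 0 := by exact_mod_cast (add_pos ha hb).ne'
  have : (a : ℂ) + twoCutMobius a b s = a * (a + b) / (a + b * s) := by
    rw [twoCutMobius]; field_simp; ring
  rw [this]
  exact div_ne_zero (mul_ne_zero (ofReal_ne_zero.2 ha.ne') hab) hs

lemma twoCutMobiusInv_twoCutMobius {s : ℂ} (hs : (a : ℂ) + b * s ≠ 0) :
    twoCutMobiusInv a b (twoCutMobius a b s) = s := by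
  have ha' : (a : ℂ) ≠ 0 := ofReal_ne_zero.2 ha.ne'
  have hb' : (b : ℂ) ≠ 0 := ofReal_ne_zero.2 hb.ne'
  rw [twoCutMobiusInv, div_eq_iff (mul_ne_zero hb' (add_twoCutMobius_ne_zero ha hb hs)),
    twoCutMobius]
  field_simp
  ring

lemma twoCutMobius_twoCutMobiusInv {ω : ℂ} (hω : (a : ℂ) + ω ≠ 0) :
    twoCutMobius a b (twoCutMobiusInv a b ω) = ω := by
  have ha' : (a : ℂ) ≠ 0 := ofReal_ne_zero.2 ha.ne'
  have hb' : (b : ℂ) ≠ 0 := ofReal_ne_zero.2 hb.ne'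
  have hab : (a : ℂ) + b ≠ 0 := by exact_mod_cast (add_pos ha hb).ne'
  have hden : (a : ℂ) + b * twoCutMobiusInv a b ω ≠ 0 := by
    have : (a : ℂ) + b * twoCutMobiusInv a b ω = a * (a + b) / (a + ω) := by
      rw [twoCutMobiusInv]; field_simp; ring
    rw [this]
    exact div_ne_zero (mul_ne_zero ha' hab) hω
  rw [twoCutMobius, div_eq_iff hden, twoCutMobiusInv]
  field_simp
  ring

lemma im_twoCutMobiusInv (ω : ℂ) :
    (twoCutMobiusInv a b ω).im = -(a * (a + b)) * ω.im / (b * normSq (a + ω)) := by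
  rw [twoCutMobiusInv, mul_div_mul_comm, ← ofReal_div, im_ofReal_mul, div_im]
  simp only [sub_re, sub_im, add_re, add_im, ofReal_re, ofReal_im, normSq_apply]
  field_simp
  ring

lemma twoCutMobiusInv_mem_slitPlane_iff {ω : ℂ} (hω : (a : ℂ) + ω ≠ 0) :
    twoCutMobiusInv a b ω ∈ slitPlane ↔ ω ∉ twoCut a b := by
  by_cases hy : ω.im = 0
  · obtain ⟨x, rfl⟩ : ∃ x : ℝ, (x : ℂ) = ω := ⟨ω.re, ext rfl hy.symm⟩
    have hx : a + x ≠ 0 := by exact_mod_cast hω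
    have : twoCutMobiusInv a b x = ((a * (b - x) / (b * (a + x)) : ℝ) : ℂ) := by
      simp [twoCutMobiusInv]
    rw [this, ofReal_mem_slitPlane, twoCut]
    simp only [mem_ofPred_eq, ofReal_im, ofReal_re, true_and, not_or, not_le]
    constructor
    · intro h
      rcases div_pos_iff.1 h with ⟨h1, h2⟩ | ⟨h1, h2⟩ <;> constructor <;> nlinarith
    · rintro ⟨h1, h2⟩
      exact div_pos (mul_pos ha (by linarith)) (mul_pos hb (by linarith))
  · have him : (twoCutMobiusInv a b ω).im ≠ 0 := by
      rw [im_twoCutMobiusInv ha hb]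
      have hab : a * (a + b) ≠ 0 := by positivity
      exact div_ne_zero (mul_ne_zero (neg_ne_zero.2 hab) hy)
        (mul_ne_zero hb.ne' (normSq_pos.2 hω).ne')
    exact iff_of_true (mem_slitPlane_iff.2 (Or.inr him)) fun h => hy h.1

end Mobius

noncomputable def twoCutMap (a b : ℝ) (z : ℂ) : ℂ :=
  4 * a * b * z / (a * (1 + z) ^ 2 + b * (1 - z) ^ 2)

noncomputable def twoCutInv (a b : ℝ) (ω : ℂ) : ℂ := cayley (twoCutMobiusInv a b ω).sqrt

lemma twoCutMap_denom_eq {a b : ℝ} {z : ℂ} (hz : 1 + z ≠ 0) :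
    (a : ℂ) * (1 + z) ^ 2 + b * (1 - z) ^ 2 = (1 + z) ^ 2 * (a + b * cayley z ^ 2) := by
  rw [cayley]; field_simp

lemma twoCutMap_eq_twoCutMobius {a b : ℝ} {z : ℂ} (hz : 1 + z ≠ 0) :
    twoCutMap a b z = twoCutMobius a b (cayley z ^ 2) := by
  have h1 : 1 - cayley z ^ 2 = 4 * z / (1 + z) ^ 2 := by rw [cayley]; field_simp; ring
  rw [twoCutMap, twoCutMobius, twoCutMap_denom_eq hz, h1, mul_div_assoc', div_div]
  ring

section TwoCutMap

variable {a b : ℝ} (ha : 0 < a) (hb : 0 < b)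
include ha hb

lemma add_mul_cayley_sq_ne_zero {z : ℂ} (hz : z ∈ ball (0 : ℂ) 1) :
    (a : ℂ) + b * cayley z ^ 2 ≠ 0 :=
  add_mul_ne_zero_of_mem_slitPlane ha hb (sq_mem_slitPlane_of_re_pos (re_cayley_pos hz))

lemma differentiableOn_twoCutMap : DifferentiableOn ℂ (twoCutMap a b) (ball 0 1) := by
  refine DifferentiableOn.div (by fun_prop) (by fun_prop) fun z hz => ?_
  have hz1 := one_add_ne_zero_of_mem_ball hz
  rw [twoCutMap_denom_eq hz1]
  exact mul_ne_zero (pow_ne_zero 2 hz1) (add_mul_cayley_sq_ne_zero ha hb hz)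

lemma mapsTo_twoCutMap : MapsTo (twoCutMap a b) (ball 0 1) (twoCut a b)ᶜ := by
  intro z hz
  have hs := add_mul_cayley_sq_ne_zero ha hb hz
  rw [twoCutMap_eq_twoCutMobius (one_add_ne_zero_of_mem_ball hz), mem_compl_iff,
    ← twoCutMobiusInv_mem_slitPlane_iff ha hb (add_twoCutMobius_ne_zero ha hb hs),
    twoCutMobiusInv_twoCutMobius ha hb hs]
  exact sq_mem_slitPlane_of_re_pos (re_cayley_pos hz)

lemma mapsTo_twoCutInv : MapsTo (twoCutInv a b) (twoCut a b)ᶜ (ball 0 1) := fun _ hω =>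
  cayley_mem_ball <| re_sqrt_pos <|
    (twoCutMobiusInv_mem_slitPlane_iff ha hb (add_ne_zero_of_notMem_twoCut hω)).2 hω

lemma leftInvOn_twoCutInv : LeftInvOn (twoCutInv a b) (twoCutMap a b) (ball 0 1) := by
  intro z hz
  have hz1 := one_add_ne_zero_of_mem_ball hz
  rw [twoCutInv, twoCutMap_eq_twoCutMobius hz1,
    twoCutMobiusInv_twoCutMobius ha hb (add_mul_cayley_sq_ne_zero ha hb hz),
    sqrt_sq_of_re_pos (re_cayley_pos hz), cayley_cayley hz1]

lemma rightInvOn_twoCutInv : RightInvOn (twoCutInv a b) (twoCutMap a b) (twoCut a b)ᶜ := by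
  intro ω hω
  have hw : 0 < (twoCutMobiusInv a b ω).sqrt.re := re_sqrt_pos <|
    (twoCutMobiusInv_mem_slitPlane_iff ha hb (add_ne_zero_of_notMem_twoCut hω)).2 hω
  rw [twoCutMap_eq_twoCutMobius (one_add_ne_zero_of_mem_ball (mapsTo_twoCutInv ha hb hω)),
    twoCutInv, cayley_cayley (one_add_ne_zero_of_re_pos hw), sq_sqrt,
    twoCutMobius_twoCutMobiusInv ha hb (add_ne_zero_of_notMem_twoCut hω)]

lemma bijOn_twoCutMap : BijOn (twoCutMap a b) (ball 0 1) (twoCut a b)ᶜ :=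
  InvOn.bijOn ⟨leftInvOn_twoCutInv ha hb, rightInvOn_twoCutInv ha hb⟩
    (mapsTo_twoCutMap ha hb) (mapsTo_twoCutInv ha hb)

end TwoCutMap

/-- The asymmetric two-cut conformal map: for `a, b > 0`,
`φ_{ab}(z) = 4abz/(a(1+z)² + b(1−z)²)` is an analytic bijection from the unit disk onto
`ℂ \ ((−∞,−a] ∪ [b,∞))`, with inverse
`z = (1 − √(a(b−ω)/(b(a+ω))))/(1 + √(a(b−ω)/(b(a+ω))))` (principal square root). -/
theorem stmt12 (a b : ℝ) (ha : 0 < a) (hb : 0 < b) :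
    let φ : ℂ → ℂ := fun z =>
      4 * (a : ℂ) * (b : ℂ) * z / ((a : ℂ) * (1 + z) ^ 2 + (b : ℂ) * (1 - z) ^ 2)
    let ψ : ℂ → ℂ := fun ω =>
      (1 - (((a : ℂ) * ((b : ℂ) - ω)) / ((b : ℂ) * ((a : ℂ) + ω))) ^ ((1 : ℂ) / 2)) /
        (1 + (((a : ℂ) * ((b : ℂ) - ω)) / ((b : ℂ) * ((a : ℂ) + ω))) ^ ((1 : ℂ) / 2))
    let S : Set ℂ := {ω : ℂ | ω.im = 0 ∧ (ω.re ≤ -a ∨ b ≤ ω.re)}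
    DifferentiableOn ℂ φ (ball (0 : ℂ) 1) ∧
    Set.BijOn φ (ball (0 : ℂ) 1) Sᶜ ∧
    (∀ ω ∈ Sᶜ, ψ ω ∈ ball (0 : ℂ) 1 ∧ φ (ψ ω) = ω) ∧
    (∀ z ∈ ball (0 : ℂ) 1, ψ (φ z) = z) := by
  intro φ ψ S
  have hψ : ψ = twoCutInv a b := by
    ext ω
    simp only [ψ, twoCutInv, cayley, Complex.sqrt, twoCutMobiusInv, one_div]
  rw [hψ]
  exact ⟨differentiableOn_twoCutMap ha hb, bijOn_twoCutMap ha hb,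
    fun ω hω => ⟨mapsTo_twoCutInv ha hb hω, rightInvOn_twoCutInv ha hb hω⟩,
    leftInvOn_twoCutInv ha hb⟩
end

section
/- Let ψ : Ω → 𝔻 be a biholomorphism (with Ω an open simply connected subset of ℂ containing the closed unit disk, ψ(0) = 0, ψ'(0) > 0), let F : Ω → ℂ be bounded analytic whose Taylor series at 0 starts with the polynomial P_n (F(ω) − P_n(ω) = O(ω^n)), and set R̂_n = Q_n ∘ ψ where Q_n is the order-n Taylor truncation at 0 of F ∘ ψ^{-1}. Then for every ω₀ ∈ Ω: |F(ω₀) − R̂_n(ω₀)| ≤ ‖F‖_∞ · |ψ(ω₀)|^n/(1 − |ψ(ω₀)|), and moreover Q_n depends only on P_n and ψ (not on F). -/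
open Metric Set Finset

/-! Transported to the disk, `f = F ∘ φ` is holomorphic on `𝔻` and bounded by `M`, so Cauchy's
estimate gives `‖f⁽ᵏ⁾(0) / k!‖ ≤ M` for every `k`, and the Taylor tail of `f` at `z = ψ ω₀` is
dominated by the geometric series `M ∑_{k ≥ n} ‖z‖ᵏ`. Since `φ 0 = 0`, Faà di Bruno's formula
expresses the derivatives of order `< n` of `G ∘ φ` at `0` through those of `G` at `0` of order
`< n` and those of `φ`, so they are the same for every `G` with the same `P_n`. -/

section FaaDiBruno

variable {𝕜 : Type*} [NontriviallyNormedField 𝕜]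
  {E F G : Type*} [NormedAddCommGroup E] [NormedSpace 𝕜 E] [NormedAddCommGroup F] [NormedSpace 𝕜 F]
  [NormedAddCommGroup G] [NormedSpace 𝕜 G]

theorem iteratedFDeriv_comp_congr_of_iteratedFDeriv_eq {g₁ g₂ : F → G} {f : E → F} {x : E}
    {n : ℕ} (hg₁ : ContDiffAt 𝕜 n g₁ (f x)) (hg₂ : ContDiffAt 𝕜 n g₂ (f x))
    (hf : ContDiffAt 𝕜 n f x)
    (h : ∀ k ≤ n, iteratedFDeriv 𝕜 k g₁ (f x) = iteratedFDeriv 𝕜 k g₂ (f x)) :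
    iteratedFDeriv 𝕜 n (g₁ ∘ f) x = iteratedFDeriv 𝕜 n (g₂ ∘ f) x := by
  rw [iteratedFDeriv_comp hg₁ hf le_rfl, iteratedFDeriv_comp hg₂ hf le_rfl]
  refine sum_congr rfl fun c _ => ?_
  simp only [FormalMultilinearSeries.compAlongOrderedFinpartition, ftaylorSeries,
    h c.length c.length_le]

theorem iteratedDeriv_comp_congr_of_iteratedDeriv_eq {g₁ g₂ : 𝕜 → G} {f : 𝕜 → 𝕜} {x : 𝕜}
    {n : ℕ} (hg₁ : ContDiffAt 𝕜 n g₁ (f x)) (hg₂ : ContDiffAt 𝕜 n g₂ (f x))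
    (hf : ContDiffAt 𝕜 n f x)
    (h : ∀ k ≤ n, iteratedDeriv k g₁ (f x) = iteratedDeriv k g₂ (f x)) :
    iteratedDeriv n (g₁ ∘ f) x = iteratedDeriv n (g₂ ∘ f) x := by
  simp only [iteratedDeriv_eq_iteratedFDeriv]
  rw [iteratedFDeriv_comp_congr_of_iteratedFDeriv_eq hg₁ hg₂ hf fun k hk => ?_]
  simp only [iteratedFDeriv_eq_equiv_comp, Function.comp_apply, h k hk]

end FaaDiBruno

namespace Complex

variable {E : Type*} [NormedAddCommGroup E] [NormedSpace ℂ E] [CompleteSpace E]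
  {f : ℂ → E} {c : ℂ} {r M : ℝ}

theorem norm_iteratedDeriv_le_of_forall_mem_ball_norm_le (hr : 0 < r)
    (hf : DifferentiableOn ℂ f (ball c r)) (hM : ∀ z ∈ ball c r, ‖f z‖ ≤ M) (k : ℕ) :
    ‖iteratedDeriv k f c‖ ≤ k.factorial * M / r ^ k := by
  have hsmaller : ∀ s ∈ Ioo 0 r, ‖iteratedDeriv k f c‖ ≤ k.factorial * M / s ^ k :=
    fun s ⟨hs0, hsr⟩ => norm_iteratedDeriv_le_of_forall_mem_sphere_norm_le k hs0
      (hf.diffContOnCl_ball (closedBall_subset_ball hsr))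
      fun z hz => hM z (sphere_subset_closedBall.trans (closedBall_subset_ball hsr) hz)
  have hlim : Filter.Tendsto (fun s : ℝ => k.factorial * M / s ^ k) (nhdsWithin r (Iio r))
      (nhds (k.factorial * M / r ^ k)) :=
    (continuousAt_const.div (continuous_pow k).continuousAt
      (pow_ne_zero k hr.ne')).tendsto.mono_left nhdsWithin_le_nhds
  exact ge_of_tendsto hlim (Filter.eventually_of_mem (Ioo_mem_nhdsLT hr) hsmaller)

theorem norm_sub_sum_taylorSeries_le (hr : 0 < r)
    (hf : DifferentiableOn ℂ f (ball c r)) (hM : ∀ z ∈ ball c r, ‖f z‖ ≤ M) {z : ℂ}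
    (hz : z ∈ ball c r) (n : ℕ) :
    ‖f z - ∑ k ∈ range n, (k.factorial : ℂ)⁻¹ • (z - c) ^ k • iteratedDeriv k f c‖ ≤
      M * (‖z - c‖ / r) ^ n / (1 - ‖z - c‖ / r) := by
  set q := ‖z - c‖ / r
  have hq0 : 0 ≤ q := by positivity
  have hq1 : q < 1 := (div_lt_one hr).2 (mem_ball_iff_norm.1 hz)
  have hsum := hasSum_taylorSeries_on_ball hf hz
  have hterm : ∀ k, ‖(k.factorial : ℂ)⁻¹ • (z - c) ^ k • iteratedDeriv k f c‖ ≤ M * q ^ k := by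
    intro k
    calc ‖(k.factorial : ℂ)⁻¹ • (z - c) ^ k • iteratedDeriv k f c‖
        = (k.factorial : ℝ)⁻¹ * ‖z - c‖ ^ k * ‖iteratedDeriv k f c‖ := by
          rw [norm_smul, norm_smul, norm_pow, norm_inv, norm_natCast, mul_assoc]
      _ ≤ (k.factorial : ℝ)⁻¹ * ‖z - c‖ ^ k * (k.factorial * M / r ^ k) := by
          gcongr
          exact norm_iteratedDeriv_le_of_forall_mem_ball_norm_le hr hf hM k
      _ = M * q ^ k := by
          rw [div_pow]
          field_simp
  rw [← (hsum.summable.sum_add_tsum_nat_add n).trans hsum.tsum_eq, add_sub_cancel_left]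
  have hgeom : HasSum (fun i => M * q ^ n * q ^ i) (M * q ^ n * (1 - q)⁻¹) :=
    (hasSum_geometric_of_lt_one hq0 hq1).mul_left _
  calc _ ≤ M * q ^ n * (1 - q)⁻¹ :=
        tsum_of_norm_bounded hgeom fun i => (hterm (i + n)).trans_eq (by ring)
    _ = M * q ^ n / (1 - q) := (div_eq_mul_inv _ _).symm

end Complex

theorem stmt18_general (Ω : Set ℂ)
    (hΩD : closedBall (0 : ℂ) 1 ⊆ Ω)
    (ψ φ : ℂ → ℂ)
    (hψbij : Set.BijOn ψ Ω (ball (0 : ℂ) 1))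
    (hψ0 : ψ 0 = 0)
    (hφ : DifferentiableOn ℂ φ (ball (0 : ℂ) 1))
    (hφψ : ∀ ω ∈ Ω, φ (ψ ω) = ω)
    (F : ℂ → ℂ) (hF : DifferentiableOn ℂ F Ω)
    (M : ℝ) (hM : ∀ ω ∈ Ω, ‖F ω‖ ≤ M)
    (n : ℕ) :
    (∀ ω₀ ∈ Ω,
      ‖F ω₀ -
          ∑ k ∈ Finset.range n,
            (iteratedDeriv k (F ∘ φ) 0 / (k.factorial : ℂ)) * (ψ ω₀) ^ k‖ ≤
        M * ‖ψ ω₀‖ ^ n / (1 - ‖ψ ω₀‖)) ∧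
    (∀ G : ℂ → ℂ, DifferentiableOn ℂ G Ω →
      (∀ k < n, iteratedDeriv k G 0 = iteratedDeriv k F 0) →
      ∀ k < n, iteratedDeriv k (G ∘ φ) 0 = iteratedDeriv k (F ∘ φ) 0) := by
  have hφ0 : φ 0 = 0 := by simpa [hψ0] using hφψ 0 (hΩD (mem_closedBall_self zero_le_one))
  have hφmaps : MapsTo φ (ball 0 1) Ω := by
    rintro _ hz
    obtain ⟨ω, hω, rfl⟩ := hψbij.surjOn hz
    rwa [hφψ ω hω]
  constructor
  · intro ω₀ hω₀
    have hbound := Complex.norm_sub_sum_taylorSeries_le one_pos (hF.comp hφ hφmaps)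
      (fun z hz => hM _ (hφmaps hz)) (hψbij.mapsTo hω₀) n
    simp only [sub_zero, div_one, Function.comp_apply, hφψ ω₀ hω₀, smul_eq_mul] at hbound
    refine le_of_eq_of_le ?_ hbound
    congr 2
    exact sum_congr rfl fun k _ => by ring
  · intro G hG hGF k hk
    have hsmooth : ∀ H : ℂ → ℂ, DifferentiableOn ℂ H (ball 0 1) → ContDiffAt ℂ k H 0 :=
      fun H hH => (hH.contDiffOn isOpen_ball).contDiffAt (ball_mem_nhds 0 one_pos)
    have hball : ball (0 : ℂ) 1 ⊆ Ω := ball_subset_closedBall.trans hΩD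
    refine iteratedDeriv_comp_congr_of_iteratedDeriv_eq ?_ ?_ (hsmooth φ hφ) ?_
    all_goals simp only [hφ0]
    exacts [hsmooth G (hG.mono hball), hsmooth F (hF.mono hball), fun j hj => hGF j (by omega)]

/-- Optimal reconstruction on a domain Ω uniformized by ψ: with `R̂_n = Q_n ∘ ψ`, where
`Q_n` is the order-`n` Taylor truncation of `F ∘ ψ⁻¹` at `0`, one has the Cauchy bound
`|F(ω₀) − R̂_n(ω₀)| ≤ ‖F‖_∞ |ψ(ω₀)|ⁿ/(1 − |ψ(ω₀)|)`, and `Q_n` depends only on the first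
`n` Taylor coefficients of `F` (i.e. on `P_n`) and on `ψ`. -/
theorem stmt18 (Ω : Set ℂ) (hΩopen : IsOpen Ω) (hΩconn : IsConnected Ω)
    (hΩD : closedBall (0 : ℂ) 1 ⊆ Ω)
    (ψ φ : ℂ → ℂ)
    (hψ : DifferentiableOn ℂ ψ Ω) (hψbij : Set.BijOn ψ Ω (ball (0 : ℂ) 1))
    (hψ0 : ψ 0 = 0) (hψ'0 : 0 < (deriv ψ 0).re ∧ (deriv ψ 0).im = 0)
    (hφ : DifferentiableOn ℂ φ (ball (0 : ℂ) 1))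
    (hφψ : ∀ ω ∈ Ω, φ (ψ ω) = ω) (hψφ : ∀ z ∈ ball (0 : ℂ) 1, ψ (φ z) = z)
    (F : ℂ → ℂ) (hF : DifferentiableOn ℂ F Ω)
    (M : ℝ) (hM : ∀ ω ∈ Ω, ‖F ω‖ ≤ M)
    (n : ℕ) :
    (∀ ω₀ ∈ Ω,
      ‖F ω₀ -
          ∑ k ∈ Finset.range n,
            (iteratedDeriv k (F ∘ φ) 0 / (k.factorial : ℂ)) * (ψ ω₀) ^ k‖ ≤
        M * ‖ψ ω₀‖ ^ n / (1 - ‖ψ ω₀‖)) ∧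
    (∀ G : ℂ → ℂ, DifferentiableOn ℂ G Ω →
      (∀ k < n, iteratedDeriv k G 0 = iteratedDeriv k F 0) →
      ∀ k < n, iteratedDeriv k (G ∘ φ) 0 = iteratedDeriv k (F ∘ φ) 0) :=
  stmt18_general Ω hΩD ψ φ hψbij hψ0 hφ hφψ F hF M hM n
end
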